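/- arXiv:1706.02176 — 7 statements merged into one kernel-verified Lean document; each statement's English description precedes it below -/
import Mathlib

section
/- An operator α: V → P(V') is maximal monotone if and only if its Fitzpatrick function f_α satisfies: (i) f_α(v,v*) ≥ ⟨v*,v⟩ for all (v,v*) ∈ V × V', and (ii) f_α(v,v*) = ⟨v*,v⟩ if and only if v* ∈ α(v). -/
open Filter Topology

/-!
Write `π(v, v*) = ⟨v*, v⟩`. Each term of the supremum defining `f_α(p)` equals
`π(p) - ⟨p₂ - q₂, p₁ - q₁⟩`, so `f_α(p) ≤ π(p)` says exactly that `p` is monotonically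
related to every point `q` of the graph of `α`, and `f_α(p) ≥ π(p)` holds on the graph
(take `q = p`). Maximal monotonicity means that the points monotonically related to the
graph are precisely the points of the graph, and the theorem is a reformulation of this.
-/

/-- A multivalued operator `α : V → 𝒫(V')` is monotone. -/
def MonotoneOp {V : Type*} [NormedAddCommGroup V] [NormedSpace ℝ V]
    (α : V → Set (StrongDual ℝ V)) : Prop :=
  ∀ v w v' w', v' ∈ α v → w' ∈ α w → 0 ≤ (v' - w') (v - w)

/-- `α` is maximal monotone: it is monotone and its graph is maximal among graphs of
monotone operators. -/
def MaximalMonotoneOp {V : Type*} [NormedAddCommGroup V] [NormedSpace ℝ V]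
    (α : V → Set (StrongDual ℝ V)) : Prop :=
  MonotoneOp α ∧
    ∀ β : V → Set (StrongDual ℝ V), MonotoneOp β → (∀ v, α v ⊆ β v) → ∀ v, β v = α v

section Fitzpatrick

variable {V : Type*} [NormedAddCommGroup V] [NormedSpace ℝ V]

noncomputable def fitzpatrickFn (α : V → Set (StrongDual ℝ V)) (p : V × StrongDual ℝ V) :
    EReal :=
  ⨆ q : {q : V × StrongDual ℝ V // q.2 ∈ α q.1}, ((p.2 q.1.1 - q.1.2 (q.1.1 - p.1) : ℝ) : EReal)

def MonotonicallyRelated (α : V → Set (StrongDual ℝ V)) (p : V × StrongDual ℝ V) : Prop :=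
  ∀ q : V × StrongDual ℝ V, q.2 ∈ α q.1 → 0 ≤ (p.2 - q.2) (p.1 - q.1)

lemma fitzpatrick_term_eq (p q : V × StrongDual ℝ V) :
    p.2 q.1 - q.2 (q.1 - p.1) = p.2 p.1 - (p.2 - q.2) (p.1 - q.1) := by
  simp only [sub_apply, map_sub]
  ring

lemma fitzpatrickFn_le_iff_monotonicallyRelated (α : V → Set (StrongDual ℝ V))
    (p : V × StrongDual ℝ V) :
    fitzpatrickFn α p ≤ ((p.2 p.1 : ℝ) : EReal) ↔ MonotonicallyRelated α p := by
  simp only [fitzpatrickFn, iSup_le_iff, Subtype.forall, EReal.coe_le_coe_iff,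
    fitzpatrick_term_eq p, sub_le_self_iff]
  exact Iff.rfl

lemma pairing_le_fitzpatrickFn_of_mem {α : V → Set (StrongDual ℝ V)}
    {p : V × StrongDual ℝ V} (hp : p.2 ∈ α p.1) :
    ((p.2 p.1 : ℝ) : EReal) ≤ fitzpatrickFn α p := by
  refine le_trans (le_of_eq ?_) (le_iSup _ (⟨p, hp⟩ : {q : V × StrongDual ℝ V // q.2 ∈ α q.1}))
  simp

lemma MonotoneOp.monotonicallyRelated_of_mem {α : V → Set (StrongDual ℝ V)}
    (hα : MonotoneOp α) {p : V × StrongDual ℝ V} (hp : p.2 ∈ α p.1) :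
    MonotonicallyRelated α p :=
  fun q hq => hα p.1 q.1 p.2 q.2 hp hq

lemma sub_apply_sub_swap (a b : StrongDual ℝ V) (x y : V) : (a - b) (x - y) = (b - a) (y - x) := by
  rw [← neg_sub b a, ← neg_sub y x, map_neg, neg_apply, neg_neg]

lemma MaximalMonotoneOp.mem_of_monotonicallyRelated {α : V → Set (StrongDual ℝ V)}
    (hα : MaximalMonotoneOp α) {p : V × StrongDual ℝ V} (hp : MonotonicallyRelated α p) :
    p.2 ∈ α p.1 := by
  let β : V → Set (StrongDual ℝ V) := fun v => α v ∪ {x | v = p.1 ∧ x = p.2}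
  have hβ : MonotoneOp β := by
    rintro v w v' w' (hv | ⟨rfl, rfl⟩) (hw | ⟨rfl, rfl⟩)
    · exact hα.1 v w v' w' hv hw
    · rw [sub_apply_sub_swap]
      exact hp (v, v') hv
    · exact hp (w, w') hw
    · simp
  rw [← hα.2 β hβ (fun _ => Set.subset_union_left) p.1]
  exact Or.inr ⟨rfl, rfl⟩

lemma maximalMonotoneOp_iff_monotonicallyRelated_iff_mem (α : V → Set (StrongDual ℝ V)) :
    MaximalMonotoneOp α ↔ ∀ p : V × StrongDual ℝ V, MonotonicallyRelated α p ↔ p.2 ∈ α p.1 := by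
  refine ⟨fun hα p => ⟨hα.mem_of_monotonicallyRelated, hα.1.monotonicallyRelated_of_mem⟩,
    fun h => ⟨fun v w v' w' hv hw => (h (v, v')).2 hv (w, w') hw, ?_⟩⟩
  intro β hβ hαβ v
  refine (Set.Subset.antisymm ?_ (hαβ v))
  intro w' hw'
  exact (h (v, w')).1 fun q hq => hβ v q.1 w' q.2 hw' (hαβ q.1 hq)

end Fitzpatrick

theorem fitzpatrick_theorem_general
    (V : Type*) [NormedAddCommGroup V] [NormedSpace ℝ V]
    (α : V → Set (StrongDual ℝ V))
    (f : V × StrongDual ℝ V → EReal)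
    (hf : ∀ p : V × StrongDual ℝ V,
      f p = ⨆ q : {q : V × StrongDual ℝ V // q.2 ∈ α q.1},
        ((p.2 q.1.1 - q.1.2 (q.1.1 - p.1) : ℝ) : EReal)) :
    MaximalMonotoneOp α ↔
      ((∀ p : V × StrongDual ℝ V, ((p.2 p.1 : ℝ) : EReal) ≤ f p) ∧
       (∀ p : V × StrongDual ℝ V, f p = ((p.2 p.1 : ℝ) : EReal) ↔ p.2 ∈ α p.1)) := by
  obtain rfl : f = fitzpatrickFn α := funext hf
  have hle := fitzpatrickFn_le_iff_monotonicallyRelated α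
  rw [maximalMonotoneOp_iff_monotonicallyRelated_iff_mem]
  constructor
  · intro h
    have hge : ∀ p, ((p.2 p.1 : ℝ) : EReal) ≤ fitzpatrickFn α p := fun p => by
      by_cases hp : p.2 ∈ α p.1
      · exact pairing_le_fitzpatrickFn_of_mem hp
      · exact (not_le.1 fun h' => hp ((h p).1 ((hle p).1 h'))).le
    exact ⟨hge, fun p => by rw [le_antisymm_iff, and_iff_left (hge p), hle, h]⟩
  · rintro ⟨hge, heq⟩ p
    rw [← hle, ← heq, le_antisymm_iff, and_iff_left (hge p)]

/-- Fitzpatrick theorem: `α` is maximal monotone iff its Fitzpatrick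
function `f_α` satisfies `f_α ≥ π` everywhere and `f_α = π` exactly on the graph of `α`. -/
theorem fitzpatrick_theorem
    (V : Type*) [NormedAddCommGroup V] [NormedSpace ℝ V]
    (α : V → Set (StrongDual ℝ V))
    (hne : ∃ p : V × StrongDual ℝ V, p.2 ∈ α p.1)
    (f : V × StrongDual ℝ V → EReal)
    (hf : ∀ p : V × StrongDual ℝ V,
      f p = ⨆ q : {q : V × StrongDual ℝ V // q.2 ∈ α q.1},
        ((p.2 q.1.1 - q.1.2 (q.1.1 - p.1) : ℝ) : EReal)) :
    MaximalMonotoneOp α ↔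
      ((∀ p : V × StrongDual ℝ V, ((p.2 p.1 : ℝ) : EReal) ≤ f p) ∧
       (∀ p : V × StrongDual ℝ V, f p = ((p.2 p.1 : ℝ) : EReal) ↔ p.2 ∈ α p.1)) :=
  fitzpatrick_theorem_general V α f hf
end

section
/- Any operator represented by a function f satisfying: f convex and lower semi-continuous on V × V', f(v,v*) ≥ ⟨v*,v⟩ everywhere, and f(v,v*) = ⟨v*,v⟩ ⟺ v* ∈ α(v), is monotone. -/
open Filter Topology

/-!
The duality pairing `π(v, v*) = ⟨v*, v⟩` is a quadratic form on `V × V'` whose defect from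
affinity along a segment is `t (1 - t) ⟨v* - w*, v - w⟩`. At two points where the convex
function `f ≥ π` touches `π`, convexity of `f` at the midpoint therefore forces this defect,
and with it `⟨v* - w*, v - w⟩`, to be nonnegative.
-/

section Pairing

variable {V : Type*} [AddCommGroup V] [Module ℝ V] [TopologicalSpace V]

theorem pairing_convexCombination (p q : V × StrongDual ℝ V) (t : ℝ) :
    (t • p + (1 - t) • q).2 (t • p + (1 - t) • q).1 =
      t * p.2 p.1 + (1 - t) * q.2 q.1 - t * (1 - t) * (p.2 - q.2) (p.1 - q.1) := by
  simp only [Prod.fst_add, Prod.snd_add, Prod.smul_fst, Prod.smul_snd, add_apply, smul_apply,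
    sub_apply, map_add, map_sub, map_smul, smul_eq_mul]
  ring

theorem pairing_sub_nonneg_of_convex_of_eq_pairing {f : V × StrongDual ℝ V → EReal}
    (hconv : ∀ p q : V × StrongDual ℝ V, ∀ t : ℝ, 0 ≤ t → t ≤ 1 →
      f (t • p + (1 - t) • q) ≤ (t : EReal) * f p + ((1 - t : ℝ) : EReal) * f q)
    (hge : ∀ p : V × StrongDual ℝ V, ((p.2 p.1 : ℝ) : EReal) ≤ f p)
    {p q : V × StrongDual ℝ V} (hp : f p = ((p.2 p.1 : ℝ) : EReal))
    (hq : f q = ((q.2 q.1 : ℝ) : EReal)) :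
    0 ≤ (p.2 - q.2) (p.1 - q.1) := by
  have hmid := (hge _).trans (hconv p q (1 / 2) (by norm_num) (by norm_num))
  rw [hp, hq, pairing_convexCombination, ← EReal.coe_mul, ← EReal.coe_mul, ← EReal.coe_add,
    EReal.coe_le_coe_iff] at hmid
  linarith

end Pairing

theorem representable_implies_monotone_general
    (V : Type*) [NormedAddCommGroup V] [NormedSpace ℝ V]
    (α : V → Set (StrongDual ℝ V))
    (f : V × StrongDual ℝ V → EReal)
    (hconv : ∀ p q : V × StrongDual ℝ V, ∀ t : ℝ, 0 ≤ t → t ≤ 1 →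
      f (t • p + (1 - t) • q) ≤ (t : EReal) * f p + ((1 - t : ℝ) : EReal) * f q)
    (hge : ∀ p : V × StrongDual ℝ V, ((p.2 p.1 : ℝ) : EReal) ≤ f p)
    (hiff : ∀ p : V × StrongDual ℝ V, f p = ((p.2 p.1 : ℝ) : EReal) ↔ p.2 ∈ α p.1) :
    MonotoneOp α := fun v w v' w' hv hw =>
  pairing_sub_nonneg_of_convex_of_eq_pairing hconv hge ((hiff (v, v')).2 hv) ((hiff (w, w')).2 hw)

/-- any operator represented by a convex lower semi-continuous function
`f ≥ π` with `f = π` exactly on the graph is monotone. -/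
theorem representable_implies_monotone
    (V : Type*) [NormedAddCommGroup V] [NormedSpace ℝ V]
    (α : V → Set (StrongDual ℝ V))
    (f : V × StrongDual ℝ V → EReal)
    (hconv : ∀ p q : V × StrongDual ℝ V, ∀ t : ℝ, 0 ≤ t → t ≤ 1 →
      f (t • p + (1 - t) • q) ≤ (t : EReal) * f p + ((1 - t : ℝ) : EReal) * f q)
    (hlsc : LowerSemicontinuous f)
    (hge : ∀ p : V × StrongDual ℝ V, ((p.2 p.1 : ℝ) : EReal) ≤ f p)
    (hiff : ∀ p : V × StrongDual ℝ V, f p = ((p.2 p.1 : ℝ) : EReal) ↔ p.2 ∈ α p.1) :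
    MonotoneOp α :=
  representable_implies_monotone_general V α f hconv hge hiff
end

section
/- If f is the Fitzpatrick function of a maximal monotone operator α: V → P(V') on a reflexive Banach space V, and g is any other convex lower semi-continuous function with g ≥ π on V × V' and g = π exactly on the graph of α, then f ≤ g on V × V'. -/
open Filter Topology

/-!
Let `q` lie on the graph of `α`, so that `g q = π q`, and let `g p = c` be finite. On the segment
`t • p + (1 - t) • q`, convexity bounds `g` above by `t c + (1 - t) π q`, while `g ≥ π` bounds it
below by a quadratic polynomial in `t` taking the value `π q` at `t = 0`. Comparing the terms of
first order in `t` as `t → 0⁺` gives `p₂ q₁ - q₂ (q₁ - p₁) ≤ c`, and the supremum of the left-hand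
side over the graph is the Fitzpatrick function `f p`.
-/

lemma le_of_forall_add_mul_le {a b c : ℝ} (h : ∀ t ∈ Set.Ioc (0 : ℝ) 1, b + t * a ≤ c) :
    b ≤ c := by
  have hlim : Tendsto (fun t : ℝ => b + t * a) (𝓝[>] 0) (𝓝 b) := by
    refine ((by fun_prop : Continuous fun t : ℝ => b + t * a).tendsto' 0 b ?_).mono_left
      nhdsWithin_le_nhds
    simp
  refine le_of_tendsto hlim ?_
  filter_upwards [Ioc_mem_nhdsGT (zero_lt_one' ℝ)] with t ht using h t ht

section Pairing

variable {V : Type*} [NormedAddCommGroup V] [NormedSpace ℝ V]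

lemma apply_convexCombination (p q : V × StrongDual ℝ V) (t : ℝ) :
    (t • p + (1 - t) • q).2 (t • p + (1 - t) • q).1 =
      t ^ 2 * p.2 p.1 + t * (1 - t) * (p.2 q.1 + q.2 p.1) + (1 - t) ^ 2 * q.2 q.1 := by
  simp only [Prod.fst_add, Prod.snd_add, Prod.smul_fst, Prod.smul_snd, map_add, map_smul,
    add_apply, smul_apply, smul_eq_mul]
  ring

lemma apply_sub_apply_le_of_convex {g : V × StrongDual ℝ V → EReal}
    (hgconv : ∀ p q : V × StrongDual ℝ V, ∀ t : ℝ, 0 ≤ t → t ≤ 1 →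
      g (t • p + (1 - t) • q) ≤ (t : EReal) * g p + ((1 - t : ℝ) : EReal) * g q)
    (hgge : ∀ p : V × StrongDual ℝ V, ((p.2 p.1 : ℝ) : EReal) ≤ g p)
    {q : V × StrongDual ℝ V} (hq : g q = ((q.2 q.1 : ℝ) : EReal)) (p : V × StrongDual ℝ V) :
    ((p.2 q.1 - q.2 (q.1 - p.1) : ℝ) : EReal) ≤ g p := by
  rcases eq_top_or_lt_top (g p) with htop | hlt
  · exact htop ▸ le_top
  have hbot : g p ≠ ⊥ := ((EReal.bot_lt_coe _).trans_le (hgge p)).ne'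
  lift g p to ℝ using ⟨hlt.ne, hbot⟩ with c hc
  have hsegment : ∀ t ∈ Set.Ioc (0 : ℝ) 1,
      t ^ 2 * p.2 p.1 + t * (1 - t) * (p.2 q.1 + q.2 p.1) + (1 - t) ^ 2 * q.2 q.1 ≤
        t * c + (1 - t) * q.2 q.1 := by
    intro t ht
    have h := (hgge _).trans (hgconv p q t ht.1.le ht.2)
    rw [← hc, hq, apply_convexCombination] at h
    exact_mod_cast h
  have hfirst : p.2 q.1 - q.2 (q.1 - p.1) ≤ c := by
    refine le_of_forall_add_mul_le (a := p.2 p.1 - (p.2 q.1 + q.2 p.1 - q.2 q.1)) fun t ht => ?_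
    rw [map_sub]
    refine le_of_mul_le_mul_left ?_ ht.1
    linear_combination hsegment t ht
  exact_mod_cast hfirst

end Pairing

theorem fitzpatrick_function_minimal_general
    (V : Type*) [NormedAddCommGroup V] [NormedSpace ℝ V]
    (α : V → Set (StrongDual ℝ V))
    (f : V × StrongDual ℝ V → EReal)
    (hf : ∀ p : V × StrongDual ℝ V,
      f p = ⨆ q : {q : V × StrongDual ℝ V // q.2 ∈ α q.1},
        ((p.2 q.1.1 - q.1.2 (q.1.1 - p.1) : ℝ) : EReal))
    (g : V × StrongDual ℝ V → EReal)
    (hgconv : ∀ p q : V × StrongDual ℝ V, ∀ t : ℝ, 0 ≤ t → t ≤ 1 →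
      g (t • p + (1 - t) • q) ≤ (t : EReal) * g p + ((1 - t : ℝ) : EReal) * g q)
    (hgge : ∀ p : V × StrongDual ℝ V, ((p.2 p.1 : ℝ) : EReal) ≤ g p)
    (hgiff : ∀ p : V × StrongDual ℝ V, g p = ((p.2 p.1 : ℝ) : EReal) ↔ p.2 ∈ α p.1) :
    ∀ p : V × StrongDual ℝ V, f p ≤ g p := by
  intro p
  rw [hf p]
  exact iSup_le fun q => apply_sub_apply_le_of_convex hgconv hgge ((hgiff q.1).2 q.2) p

/-- the Fitzpatrick function of a maximal monotone operator `α` on a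
reflexive Banach space is the smallest representative function of `α`. -/
theorem fitzpatrick_function_minimal
    (V : Type*) [NormedAddCommGroup V] [NormedSpace ℝ V] [CompleteSpace V]
    (hrefl : Function.Surjective (NormedSpace.inclusionInDoubleDual ℝ V))
    (α : V → Set (StrongDual ℝ V))
    (hmax : MaximalMonotoneOp α)
    (hne : ∃ p : V × StrongDual ℝ V, p.2 ∈ α p.1)
    (f : V × StrongDual ℝ V → EReal)
    (hf : ∀ p : V × StrongDual ℝ V,
      f p = ⨆ q : {q : V × StrongDual ℝ V // q.2 ∈ α q.1},
        ((p.2 q.1.1 - q.1.2 (q.1.1 - p.1) : ℝ) : EReal))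
    (g : V × StrongDual ℝ V → EReal)
    (hgconv : ∀ p q : V × StrongDual ℝ V, ∀ t : ℝ, 0 ≤ t → t ≤ 1 →
      g (t • p + (1 - t) • q) ≤ (t : EReal) * g p + ((1 - t : ℝ) : EReal) * g q)
    (hglsc : LowerSemicontinuous g)
    (hgge : ∀ p : V × StrongDual ℝ V, ((p.2 p.1 : ℝ) : EReal) ≤ g p)
    (hgiff : ∀ p : V × StrongDual ℝ V, g p = ((p.2 p.1 : ℝ) : EReal) ↔ p.2 ∈ α p.1) :
    ∀ p : V × StrongDual ℝ V, f p ≤ g p :=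
  fitzpatrick_function_minimal_general V α f hf g hgconv hgge hgiff
end

section
/- Let f weakly represent an operator α: V → P(V') and let L ∈ L(V;V') be a positive (i.e. ⟨Lv,v⟩ ≥ 0) bounded linear operator. Then g₁(v,v*) := f(v, v* - Lv) + ⟨Lv, v⟩ weakly represents the operator α + L. Moreover, if f is convex then g₁ is convex. -/
open Filter Topology

/-- Weak convergence of a sequence in `V`. -/
def WeakConvSeq {V : Type*} [NormedAddCommGroup V] [NormedSpace ℝ V]
    (v : ℕ → V) (v0 : V) : Prop :=
  ∀ φ : StrongDual ℝ V, Tendsto (fun n => φ (v n)) atTop (𝓝 (φ v0))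

/-- Weak convergence of a sequence in `V'` (weak star, which agrees with the weak
topology on the dual of a reflexive space). -/
def WeakStarConvSeq {V : Type*} [NormedAddCommGroup V] [NormedSpace ℝ V]
    (f : ℕ → StrongDual ℝ V) (f0 : StrongDual ℝ V) : Prop :=
  ∀ w : V, Tendsto (fun n => f n w) atTop (𝓝 (f0 w))

/-- Sequential lower semicontinuity w.r.t. the weak topology of `V × V'`. -/
def WeakSeqLSC {V : Type*} [NormedAddCommGroup V] [NormedSpace ℝ V]
    (f : V × StrongDual ℝ V → EReal) : Prop :=
  ∀ (v : ℕ → V) (vs : ℕ → StrongDual ℝ V) (v0 : V) (vs0 : StrongDual ℝ V),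
    WeakConvSeq v v0 → WeakStarConvSeq vs vs0 →
    f (v0, vs0) ≤ liminf (fun n => f (v n, vs n)) atTop

/-! The convexity part needs only that `f(v, v* - Lv)` is convex (a convex function composed
with a linear map) and that the quadratic form `v ↦ ⟨Lv, v⟩` of a positive operator is convex.
For the weak lower semicontinuity, `⟨Lvₙ, vₙ⟩ ≥ ⟨Lvₙ, v⟩ + ⟨Lv, vₙ⟩ - ⟨Lv, v⟩` by positivity
of `L(vₙ - v)`, and the right-hand side converges to `⟨Lv, v⟩` when `vₙ ⇀ v`; the shifted
dual variable `vₙ* - Lvₙ` converges weakly star since `L` is weak-to-weak-star continuous. -/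

def ConvexEReal {E : Type*} [AddCommMonoid E] [Module ℝ E] (F : E → EReal) : Prop :=
  ∀ p q : E, ∀ t : ℝ, 0 ≤ t → t ≤ 1 →
    F (t • p + (1 - t) • q) ≤ (t : EReal) * F p + ((1 - t : ℝ) : EReal) * F q

section Convexity

variable {E E' : Type*} [AddCommMonoid E] [Module ℝ E] [AddCommMonoid E'] [Module ℝ E']

lemma ConvexEReal.comp_linearMap {F : E' → EReal} (hF : ConvexEReal F) (A : E →ₗ[ℝ] E') :
    ConvexEReal (F ∘ A) := by
  intro p q t ht0 ht1
  simpa only [Function.comp_apply, map_add, map_smul] using hF (A p) (A q) t ht0 ht1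

lemma ConvexEReal.add_real {F : E → EReal} {g : E → ℝ} (hF : ConvexEReal F)
    (hg : ConvexOn ℝ Set.univ g) : ConvexEReal (fun x => F x + (g x : EReal)) := by
  intro p q t ht0 ht1
  have h1t : 0 ≤ 1 - t := sub_nonneg.2 ht1
  have hgle : g (t • p + (1 - t) • q) ≤ t * g p + (1 - t) * g q :=
    hg.2 (Set.mem_univ p) (Set.mem_univ q) ht0 h1t (add_sub_cancel t 1)
  calc F (t • p + (1 - t) • q) + (g (t • p + (1 - t) • q) : EReal)
      ≤ ((t : EReal) * F p + ((1 - t : ℝ) : EReal) * F q)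
          + ((t : EReal) * g p + ((1 - t : ℝ) : EReal) * g q) := by
        gcongr
        · exact hF p q t ht0 ht1
        · exact_mod_cast hgle
    _ = (t : EReal) * (F p + g p) + ((1 - t : ℝ) : EReal) * (F q + g q) := by
        rw [EReal.left_distrib_of_nonneg_of_ne_top (EReal.coe_nonneg.2 ht0) (EReal.coe_ne_top _),
          EReal.left_distrib_of_nonneg_of_ne_top (EReal.coe_nonneg.2 h1t) (EReal.coe_ne_top _),
          add_add_add_comm]

end Convexity

lemma LinearMap.BilinForm.convexOn_univ_apply_self {E : Type*} [AddCommGroup E] [Module ℝ E]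
    (B : LinearMap.BilinForm ℝ E) (hB : ∀ v, 0 ≤ B v v) :
    ConvexOn ℝ Set.univ (fun v => B v v) := by
  refine ⟨convex_univ, fun a _ b _ s t hs ht hst => ?_⟩
  have hgap : s • B a a + t • B b b - B (s • a + t • b) (s • a + t • b)
      = s * t * B (a - b) (a - b) := by
    simp only [map_add, map_sub, map_smul, LinearMap.add_apply, LinearMap.sub_apply,
      LinearMap.smul_apply, smul_eq_mul]
    obtain rfl : t = 1 - s := by linarith
    ring
  have := mul_nonneg (mul_nonneg hs ht) (hB (a - b))
  linarith

section WeakConvergence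

variable {V : Type*} [NormedAddCommGroup V] [NormedSpace ℝ V]

lemma WeakStarConvSeq.sub {f g : ℕ → StrongDual ℝ V} {f0 g0 : StrongDual ℝ V}
    (hf : WeakStarConvSeq f f0) (hg : WeakStarConvSeq g g0) :
    WeakStarConvSeq (fun n => f n - g n) (f0 - g0) :=
  fun w => (hf w).sub (hg w)

lemma WeakConvSeq.map {v : ℕ → V} {v0 : V} (hv : WeakConvSeq v v0)
    (L : V →L[ℝ] StrongDual ℝ V) : WeakStarConvSeq (fun n => L (v n)) (L v0) :=
  fun w => hv (L.flip w)

lemma WeakConvSeq.apply_self_le_liminf {v : ℕ → V} {v0 : V} (hv : WeakConvSeq v v0)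
    {L : V →L[ℝ] StrongDual ℝ V} (hL : ∀ v, 0 ≤ L v v) :
    ((L v0 v0 : ℝ) : EReal) ≤ liminf (fun n => ((L (v n) (v n) : ℝ) : EReal)) atTop := by
  have hlower : ∀ n, L (v n) v0 + L v0 (v n) - L v0 v0 ≤ L (v n) (v n) := fun n => by
    have := hL (v n - v0)
    simp only [map_sub, sub_apply] at this
    linarith
  have hlim : Tendsto (fun n => L (v n) v0 + L v0 (v n) - L v0 v0) atTop (𝓝 (L v0 v0)) := by
    simpa using ((hv.map L v0).add (hv (L v0))).sub_const (L v0 v0)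
  calc ((L v0 v0 : ℝ) : EReal)
      = liminf (fun n => ((L (v n) v0 + L v0 (v n) - L v0 v0 : ℝ) : EReal)) atTop :=
        ((continuous_coe_real_ereal.tendsto _).comp hlim).liminf_eq.symm
    _ ≤ liminf (fun n => ((L (v n) (v n) : ℝ) : EReal)) atTop :=
        liminf_le_liminf (Eventually.of_forall fun n => EReal.coe_le_coe_iff.2 (hlower n))

lemma WeakSeqLSC.shift_add_apply_self {f : V × StrongDual ℝ V → EReal} (hf : WeakSeqLSC f)
    {L : V →L[ℝ] StrongDual ℝ V} (hL : ∀ v, 0 ≤ L v v) :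
    WeakSeqLSC (fun p => f (p.1, p.2 - L p.1) + ((L p.1 p.1 : ℝ) : EReal)) := by
  intro v vs v0 vs0 hv hvs
  calc f (v0, vs0 - L v0) + ((L v0 v0 : ℝ) : EReal)
      ≤ liminf (fun n => f (v n, vs n - L (v n))) atTop
          + liminf (fun n => ((L (v n) (v n) : ℝ) : EReal)) atTop :=
        add_le_add (hf _ _ _ _ hv (hvs.sub (hv.map L))) (hv.apply_self_le_liminf hL)
    _ ≤ _ := EReal.le_liminf_add

end WeakConvergence

lemma EReal.add_coe_eq_coe_iff {x : EReal} {r s : ℝ} : x + r = s ↔ x = ((s - r : ℝ) : EReal) := by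
  constructor
  · intro h
    rw [EReal.coe_sub, ← h, EReal.add_sub_cancel_right]
  · rintro rfl
    rw [← EReal.coe_add, _root_.sub_add_cancel]

theorem representation_sum_linear_general
    (V : Type*) [NormedAddCommGroup V] [NormedSpace ℝ V]
    (α : V → Set (StrongDual ℝ V))
    (f : V × StrongDual ℝ V → EReal)
    (hflsc : WeakSeqLSC f)
    (hfge : ∀ p : V × StrongDual ℝ V, ((p.2 p.1 : ℝ) : EReal) ≤ f p)
    (hfiff : ∀ p : V × StrongDual ℝ V, f p = ((p.2 p.1 : ℝ) : EReal) ↔ p.2 ∈ α p.1)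
    (L : V →L[ℝ] StrongDual ℝ V)
    (hLpos : ∀ v : V, 0 ≤ L v v)
    (g₁ : V × StrongDual ℝ V → EReal)
    (hg₁ : ∀ p : V × StrongDual ℝ V,
      g₁ p = f (p.1, p.2 - L p.1) + ((L p.1 p.1 : ℝ) : EReal)) :
    WeakSeqLSC g₁ ∧
    (∀ p : V × StrongDual ℝ V, ((p.2 p.1 : ℝ) : EReal) ≤ g₁ p) ∧
    (∀ p : V × StrongDual ℝ V,
      g₁ p = ((p.2 p.1 : ℝ) : EReal) ↔ ∃ u ∈ α p.1, p.2 = u + L p.1) ∧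
    ((∀ p q : V × StrongDual ℝ V, ∀ t : ℝ, 0 ≤ t → t ≤ 1 →
        f (t • p + (1 - t) • q) ≤ (t : EReal) * f p + ((1 - t : ℝ) : EReal) * f q) →
      (∀ p q : V × StrongDual ℝ V, ∀ t : ℝ, 0 ≤ t → t ≤ 1 →
        g₁ (t • p + (1 - t) • q) ≤ (t : EReal) * g₁ p + ((1 - t : ℝ) : EReal) * g₁ q)) := by
  obtain rfl : g₁ = fun p => f (p.1, p.2 - L p.1) + ((L p.1 p.1 : ℝ) : EReal) := funext hg₁
  have hshift (p : V × StrongDual ℝ V) : (p.2 - L p.1) p.1 = p.2 p.1 - L p.1 p.1 := rfl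
  refine ⟨hflsc.shift_add_apply_self hLpos, fun p => ?_, fun p => ?_, fun hconv => ?_⟩
  · have := add_le_add_left (hfge (p.1, p.2 - L p.1)) ((L p.1 p.1 : ℝ) : EReal)
    rwa [hshift, ← EReal.coe_add, sub_add_cancel] at this
  · rw [EReal.add_coe_eq_coe_iff, ← hshift, hfiff]
    exact ⟨fun h => ⟨_, h, (sub_add_cancel _ _).symm⟩, fun ⟨u, hu, hp⟩ => by
      rwa [hp, add_sub_cancel_right]⟩
  · let shear : V × StrongDual ℝ V →ₗ[ℝ] V × StrongDual ℝ V :=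
      (LinearMap.fst ℝ _ _).prod (LinearMap.snd ℝ _ _ - L.toLinearMap ∘ₗ LinearMap.fst ℝ _ _)
    exact ((show ConvexEReal f from hconv).comp_linearMap shear).add_real
      ((LinearMap.BilinForm.convexOn_univ_apply_self L.toLinearMap₁₂ hLpos).comp_linearMap
        (LinearMap.fst ℝ _ _))

/-- if `f` weakly represents `α` and `L` is a positive bounded linear
operator, then `g₁(v,v*) = f(v, v* - Lv) + ⟨Lv,v⟩` weakly represents `α + L`;
moreover `g₁` is convex if `f` is. -/
theorem representation_sum_linear
    (V : Type*) [NormedAddCommGroup V] [NormedSpace ℝ V] [CompleteSpace V]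
    (hrefl : Function.Surjective (NormedSpace.inclusionInDoubleDual ℝ V))
    (α : V → Set (StrongDual ℝ V))
    (f : V × StrongDual ℝ V → EReal)
    (hflsc : WeakSeqLSC f)
    (hfge : ∀ p : V × StrongDual ℝ V, ((p.2 p.1 : ℝ) : EReal) ≤ f p)
    (hfiff : ∀ p : V × StrongDual ℝ V, f p = ((p.2 p.1 : ℝ) : EReal) ↔ p.2 ∈ α p.1)
    (L : V →L[ℝ] StrongDual ℝ V)
    (hLpos : ∀ v : V, 0 ≤ L v v)
    (g₁ : V × StrongDual ℝ V → EReal)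
    (hg₁ : ∀ p : V × StrongDual ℝ V,
      g₁ p = f (p.1, p.2 - L p.1) + ((L p.1 p.1 : ℝ) : EReal)) :
    WeakSeqLSC g₁ ∧
    (∀ p : V × StrongDual ℝ V, ((p.2 p.1 : ℝ) : EReal) ≤ g₁ p) ∧
    (∀ p : V × StrongDual ℝ V,
      g₁ p = ((p.2 p.1 : ℝ) : EReal) ↔ ∃ u ∈ α p.1, p.2 = u + L p.1) ∧
    ((∀ p q : V × StrongDual ℝ V, ∀ t : ℝ, 0 ≤ t → t ≤ 1 →
        f (t • p + (1 - t) • q) ≤ (t : EReal) * f p + ((1 - t : ℝ) : EReal) * f q) →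
      (∀ p q : V × StrongDual ℝ V, ∀ t : ℝ, 0 ≤ t → t ≤ 1 →
        g₁ (t • p + (1 - t) • q) ≤ (t : EReal) * g₁ p + ((1 - t : ℝ) : EReal) * g₁ q)) :=
  representation_sum_linear_general V α f hflsc hfge hfiff L hLpos g₁ hg₁
end

section
/- Let X be a Hausdorff topological space, Y a reflexive Banach space with weak topology, and φ: X × Y → ℝ ∪ {+∞} lower semi-continuous. If inf_{x ∈ X} φ(x,y) → +∞ as ‖y‖_Y → +∞, then the function x ↦ inf_{y ∈ Y} φ(x,y) is lower semi-continuous on X. -/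
/-!
Fix `x₀` and a level `c'` strictly below `inf_y φ(x₀, y)`. Uniform coercivity confines every `y`
with `φ(x, y) ≤ c'` for some `x` to a compact set `K`; here `K` is a closed ball, weakly compact
because reflexivity identifies `Y` with its bidual carrying the weak-* topology, where
Banach–Alaoglu applies. Lower semicontinuity and the tube lemma give `c' < φ(x, y)` for all
`y ∈ K` and all `x` near `x₀`, and off `K` this holds by the choice of `K`.
-/

open Filter Topology

/-- The weak topology on a normed space `Y`: the topology induced by all continuous
linear functionals. -/
def weakTopology (Y : Type*) [NormedAddCommGroup Y] [NormedSpace ℝ Y] :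
    TopologicalSpace Y :=
  TopologicalSpace.induced (fun (y : Y) (φ : StrongDual ℝ Y) => φ y) Pi.topologicalSpace

open Metric

theorem isCompact_closedBall_weakTopology {Y : Type*} [NormedAddCommGroup Y] [NormedSpace ℝ Y]
    (hrefl : Function.Surjective (NormedSpace.inclusionInDoubleDual ℝ Y)) (r : ℝ) :
    @IsCompact Y (weakTopology Y) (closedBall 0 r) := by
  let e := LinearIsometryEquiv.ofSurjective (NormedSpace.inclusionInDoubleDualLi ℝ) hrefl
  let J : Y → WeakDual ℝ (StrongDual ℝ Y) := fun y => StrongDual.toWeakDual (e y)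
  have hJ : @IsInducing _ _ (weakTopology Y) _ J := @IsInducing.mk _ _ (weakTopology Y) _ J <| by
    show _ = TopologicalSpace.induced J (TopologicalSpace.induced
      (fun g x => topDualPairing ℝ (StrongDual ℝ Y) g x) Pi.topologicalSpace)
    rw [induced_compose]
    rfl
  have himage : J '' closedBall 0 r = WeakDual.toStrongDual ⁻¹' closedBall 0 r := by
    ext g
    simp only [Set.mem_image, Set.mem_preimage, mem_closedBall_zero_iff]
    constructor
    · rintro ⟨y, hy, rfl⟩
      exact (dist_zero_right (e y : StrongDual ℝ _)).trans_le ((e.norm_map y).trans_le hy)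
    · intro hg
      refine ⟨e.symm (WeakDual.toStrongDual g), ?_, by simp [J]⟩
      exact (e.symm.norm_map _).trans_le
        ((dist_zero_right (WeakDual.toStrongDual g : StrongDual ℝ _)).symm.trans_le hg)
  refine (@IsInducing.isCompact_iff _ _ (weakTopology Y) _ _ _ hJ).2 ?_
  rw [himage]
  exact WeakDual.isCompact_closedBall 0 r

theorem LowerSemicontinuous.iInf_snd_of_tendsto_cocompact {X Y α : Type*} [TopologicalSpace X]
    [TopologicalSpace Y] [CompleteLinearOrder α] [DenselyOrdered α] [TopologicalSpace α]
    [OrderTopology α] {φ : X × Y → α} (hφ : LowerSemicontinuous φ)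
    (hcoer : Tendsto (fun y => ⨅ x, φ (x, y)) (cocompact Y) (𝓝 ⊤)) :
    LowerSemicontinuous fun x => ⨅ y, φ (x, y) := by
  intro x₀ c hc
  obtain ⟨c', hcc', hc'⟩ := exists_between hc
  obtain ⟨K, hK, hKc⟩ := mem_cocompact.1 (hcoer (Ioi_mem_nhds (hc'.trans_le le_top)))
  have hnear : ∀ᶠ x in 𝓝 x₀, ∀ y ∈ K, c' < φ (x, y) :=
    hK.eventually_forall_of_forall_eventually fun y _ =>
      hφ (x₀, y) c' (hc'.trans_le (iInf_le _ y))
  filter_upwards [hnear] with x hx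
  refine hcc'.trans_le (le_iInf fun y => ?_)
  by_cases hy : y ∈ K
  · exact (hx y hy).le
  · exact (hKc hy).le.trans (iInf_le _ x)

theorem lsc_of_inf_coercive_general
    (X : Type*) [TopologicalSpace X]
    (Y : Type*) [NormedAddCommGroup Y] [NormedSpace ℝ Y]
    (hrefl : Function.Surjective (NormedSpace.inclusionInDoubleDual ℝ Y))
    (φ : X × Y → EReal)
    (hlsc : @LowerSemicontinuous (X × Y) EReal
      (@instTopologicalSpaceProd X Y _ (weakTopology Y)) _ φ)
    (hcoer : ∀ C : ℝ, ∃ R : ℝ, ∀ y : Y, R < ‖y‖ → ∀ x : X, (C : EReal) ≤ φ (x, y)) :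
    LowerSemicontinuous (fun x : X => ⨅ y : Y, φ (x, y)) := by
  let := weakTopology Y
  refine hlsc.iInf_snd_of_tendsto_cocompact (EReal.tendsto_nhds_top_iff_real.2 fun C => ?_)
  obtain ⟨R, hR⟩ := hcoer (C + 1)
  filter_upwards [(isCompact_closedBall_weakTopology hrefl R).compl_mem_cocompact] with y hy
  calc (C : EReal) < (C + 1 : ℝ) := EReal.coe_lt_coe_iff.2 (lt_add_one C)
    _ ≤ ⨅ x, φ (x, y) := le_iInf (hR y (by simpa using hy))

/-- if `X` is Hausdorff, `Y` is a reflexive Banach space with its weak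
topology, `φ : X × Y → ℝ ∪ {+∞}` is lower semi-continuous and
`inf_x φ(x,y) → +∞` as `‖y‖ → ∞`, then `x ↦ inf_y φ(x,y)` is lower semi-continuous. -/
theorem lsc_of_inf_coercive
    (X : Type*) [TopologicalSpace X] [T2Space X]
    (Y : Type*) [NormedAddCommGroup Y] [NormedSpace ℝ Y] [CompleteSpace Y]
    (hrefl : Function.Surjective (NormedSpace.inclusionInDoubleDual ℝ Y))
    (φ : X × Y → EReal)
    (hlsc : @LowerSemicontinuous (X × Y) EReal
      (@instTopologicalSpaceProd X Y _ (weakTopology Y)) _ φ)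
    (hcoer : ∀ C : ℝ, ∃ R : ℝ, ∀ y : Y, R < ‖y‖ → ∀ x : X, (C : EReal) ≤ φ (x, y)) :
    LowerSemicontinuous (fun x : X => ⨅ y : Y, φ (x, y)) :=
  lsc_of_inf_coercive_general X Y hrefl φ hlsc hcoer
end

section
/- Under the semi-monotonicity hypotheses on β, for any u, ṽ ∈ V the mapping γ_{u,ṽ}: V → ℝ ∪ {+∞}, v ↦ sup{⟨u*, v - ṽ⟩ : u* ∈ β(v,u)} is weakly lower semi-continuous. -/
open Filter Topology

/-! Fix `u' ∈ β(e v₀, u)`. Since `vₙ ⇀ v₀` in `V`, compactness gives `e vₙ → e v₀` in `H`,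
so the semi-continuity of `β` in its first argument yields `uₙ ∈ β(e vₙ, u)` with `uₙ → u'`
strongly in `V'`. A weakly convergent sequence is bounded, so the strong–weak pairing converges:
`⟨u', v₀ - w⟩ = lim ⟨uₙ, vₙ - w⟩ ≤ liminf γ(vₙ)`. Taking the supremum over `u'` gives the claim. -/

namespace WeakConvSeq

variable {V : Type*} [NormedAddCommGroup V] [NormedSpace ℝ V] {v : ℕ → V} {v0 : V}

theorem sub_const (hv : WeakConvSeq v v0) (w : V) :
    WeakConvSeq (fun n => v n - w) (v0 - w) := fun φ => by
  simpa only [map_sub] using (hv φ).sub_const (φ w)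

theorem exists_norm_le [CompleteSpace V] (hv : WeakConvSeq v v0) :
    ∃ C, ∀ n, ‖v n‖ ≤ C := by
  obtain ⟨C, hC⟩ := banach_steinhaus
    (g := fun n => NormedSpace.inclusionInDoubleDual ℝ V (v n)) fun φ => by
      obtain ⟨M, hM⟩ := (hv φ).norm.bddAbove_range
      exact ⟨M, fun n => by simpa using hM (Set.mem_range_self n)⟩
  refine ⟨C, fun n => ?_⟩
  rw [← (NormedSpace.inclusionInDoubleDualLi (𝕜 := ℝ) (E := V)).norm_map (v n)]
  exact hC n

theorem tendsto_apply_of_tendsto [CompleteSpace V] (hv : WeakConvSeq v v0)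
    {φ : ℕ → StrongDual ℝ V} {φ0 : StrongDual ℝ V} (hφ : Tendsto φ atTop (𝓝 φ0)) :
    Tendsto (fun n => φ n (v n)) atTop (𝓝 (φ0 v0)) := by
  obtain ⟨C, hC⟩ := hv.exists_norm_le
  have hdiff : Tendsto (fun n => (φ n - φ0) (v n)) atTop (𝓝 0) := by
    refine squeeze_zero_norm (fun n => ?_)
      (by simpa using (tendsto_iff_norm_sub_tendsto_zero.mp hφ).mul_const C)
    calc ‖(φ n - φ0) (v n)‖ ≤ ‖φ n - φ0‖ * ‖v n‖ := (φ n - φ0).le_opNorm _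
      _ ≤ ‖φ n - φ0‖ * C := mul_le_mul_of_nonneg_left (hC n) (norm_nonneg _)
  simpa using hdiff.add (hv φ0)

end WeakConvSeq

theorem gamma_weakly_lsc_general
    (V : Type*) [NormedAddCommGroup V] [NormedSpace ℝ V] [CompleteSpace V]
    (H : Type*) [NormedAddCommGroup H] [InnerProductSpace ℝ H]
    (e : V →L[ℝ] H)
    (hcompact : ∀ (vn : ℕ → V) (v0 : V), WeakConvSeq vn v0 →
      Tendsto (fun n => e (vn n)) atTop (𝓝 (e v0)))
    (β : H → V → Set (StrongDual ℝ V))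
    (hlsc : ∀ (z : H) (u : V) (u' : StrongDual ℝ V), u' ∈ β z u →
      ∀ zn : ℕ → H, Tendsto zn atTop (𝓝 z) →
        ∃ un : ℕ → StrongDual ℝ V,
          (∀ n, un n ∈ β (zn n) u) ∧ Tendsto un atTop (𝓝 u'))
    (u w : V)
    (γ : V → EReal)
    (hγ : ∀ v : V, γ v = ⨆ u' : {u' : StrongDual ℝ V // u' ∈ β (e v) u},
      ((u'.1 (v - w) : ℝ) : EReal)) :
    ∀ (vn : ℕ → V) (v0 : V), WeakConvSeq vn v0 →
      γ v0 ≤ liminf (fun n => γ (vn n)) atTop := by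
  intro vn v0 hweak
  rw [hγ v0]
  refine iSup_le fun ⟨u', hu'⟩ => ?_
  obtain ⟨un, hun, hulim⟩ := hlsc (e v0) u u' hu' _ (hcompact vn v0 hweak)
  have hpair : Tendsto (fun n => ((un n (vn n - w) : ℝ) : EReal)) atTop
      (𝓝 ((u' (v0 - w) : ℝ) : EReal)) :=
    (continuous_coe_real_ereal.tendsto _).comp
      ((hweak.sub_const w).tendsto_apply_of_tendsto hulim)
  have hle : ∀ n, ((un n (vn n - w) : ℝ) : EReal) ≤ γ (vn n) := fun n => by
    rw [hγ (vn n)]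
    exact le_iSup (fun u'' : {u'' : StrongDual ℝ V // u'' ∈ β (e (vn n)) u} =>
      ((u''.1 (vn n - w) : ℝ) : EReal)) ⟨un n, hun n⟩
  calc ((u' (v0 - w) : ℝ) : EReal)
      = liminf (fun n => ((un n (vn n - w) : ℝ) : EReal)) atTop := hpair.liminf_eq.symm
    _ ≤ liminf (fun n => γ (vn n)) atTop := liminf_le_liminf (Eventually.of_forall hle)

/-- under the semi-monotonicity hypotheses on `β`, for any `u, ṽ ∈ V`
the mapping `γ_{u,ṽ} : v ↦ sup{⟨u*, v - ṽ⟩ : u* ∈ β(v,u)}` is weakly (sequentially)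
lower semi-continuous on `V`. -/
theorem gamma_weakly_lsc
    (V : Type*) [NormedAddCommGroup V] [NormedSpace ℝ V] [CompleteSpace V]
    (hrefl : Function.Surjective (NormedSpace.inclusionInDoubleDual ℝ V))
    (H : Type*) [NormedAddCommGroup H] [InnerProductSpace ℝ H] [CompleteSpace H]
    (e : V →L[ℝ] H) (he : Function.Injective e) (hdense : DenseRange e)
    (hcompact : ∀ (vn : ℕ → V) (v0 : V), WeakConvSeq vn v0 →
      Tendsto (fun n => e (vn n)) atTop (𝓝 (e v0)))
    (β : H → V → Set (StrongDual ℝ V))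
    (hmax : ∀ z : H, MaximalMonotoneOp (β z))
    (hlsc : ∀ (z : H) (u : V) (u' : StrongDual ℝ V), u' ∈ β z u →
      ∀ zn : ℕ → H, Tendsto zn atTop (𝓝 z) →
        ∃ un : ℕ → StrongDual ℝ V,
          (∀ n, un n ∈ β (zn n) u) ∧ Tendsto un atTop (𝓝 u'))
    (u w : V)
    (γ : V → EReal)
    (hγ : ∀ v : V, γ v = ⨆ u' : {u' : StrongDual ℝ V // u' ∈ β (e v) u},
      ((u'.1 (v - w) : ℝ) : EReal)) :
    ∀ (vn : ℕ → V) (v0 : V), WeakConvSeq vn v0 →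
      γ v0 ≤ liminf (fun n => γ (vn n)) atTop :=
  gamma_weakly_lsc_general V H e hcompact β hlsc u w γ hγ
end

section
/- For v in the space 𝒱 := {v ∈ L^p(0,T;V) : D_t v ∈ L^{p'}(0,T;V')} and the weight dμ(t) = (T-t)dt, there holds ∫₀ᵀ ⟨D_t v, v⟩ dμ(t) = (1/2)∫₀ᵀ ‖v(t)‖_H² dt − (T/2)‖v(0)‖_H². Consequently, on the affine subspace of functions with v(0) = u⁰ fixed, the time-derivative operator D_t: 𝒱_{μ,u⁰} ⊂ L^p_μ(0,T;V) → L^{p'}_μ(0,T;V') is monotone. -/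
/-! Integrate by parts with the weight `b - t`, which vanishes at `b` and has derivative `-1`,
against `‖v‖² / 2`, whose derivative is `⟪v', v⟫`. Monotonicity is the identity for `v - w`,
whose initial value vanishes. -/

open intervalIntegral

section WeightedEnergy

variable {H : Type*} [NormedAddCommGroup H] [InnerProductSpace ℝ H] {v v' : ℝ → H} {a b : ℝ}

theorem integral_inner_deriv_mul_sub_eq
    (hv : ∀ t ∈ Set.uIcc a b, HasDerivAt v (v' t) t) (hv' : ContinuousOn v' (Set.uIcc a b)) :
    ∫ t in a..b, inner ℝ (v' t) (v t) * (b - t) =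
      (1 / 2) * (∫ t in a..b, ‖v t‖ ^ 2) - ((b - a) / 2) * ‖v a‖ ^ 2 := by
  have hvc : ContinuousOn v (Set.uIcc a b) := fun t ht =>
    (hv t ht).continuousAt.continuousWithinAt
  have hweight : ∀ t ∈ Set.uIcc a b, HasDerivAt (fun s => b - s) (-1 : ℝ) t := fun t _ => by
    simpa using (hasDerivAt_id t).const_sub b
  have henergy : ∀ t ∈ Set.uIcc a b,
      HasDerivAt (fun s => ‖v s‖ ^ 2 / 2) (inner ℝ (v' t) (v t)) t := fun t ht => by
    simpa [real_inner_comm] using (hv t ht).norm_sq.div_const 2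
  have hparts := integral_mul_deriv_eq_deriv_mul hweight henergy intervalIntegrable_const
    (hv'.inner hvc).intervalIntegrable
  simp only [sub_self, zero_mul, neg_one_mul, integral_neg, zero_sub, sub_neg_eq_add] at hparts
  simp_rw [mul_comm _ (b - _)]
  rw [hparts, integral_div]
  ring

theorem integral_inner_deriv_mul_sub_nonneg (hab : a ≤ b)
    (hv : ∀ t ∈ Set.uIcc a b, HasDerivAt v (v' t) t) (hv' : ContinuousOn v' (Set.uIcc a b))
    (hva : v a = 0) :
    0 ≤ ∫ t in a..b, inner ℝ (v' t) (v t) * (b - t) := by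
  rw [integral_inner_deriv_mul_sub_eq hv hv', hva, norm_zero]
  have hsq : 0 ≤ ∫ t in a..b, ‖v t‖ ^ 2 := integral_nonneg hab fun t _ => sq_nonneg _
  linarith

end WeightedEnergy

theorem weighted_derivative_identity_and_monotonicity_general
    (H : Type*) [NormedAddCommGroup H] [InnerProductSpace ℝ H]
    (T : ℝ) (hT : 0 < T)
    (v w : ℝ → H) (v' w' : ℝ → H)
    (hv : ∀ t ∈ Set.Icc (0 : ℝ) T, HasDerivAt v (v' t) t)
    (hw : ∀ t ∈ Set.Icc (0 : ℝ) T, HasDerivAt w (w' t) t)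
    (hv' : ContinuousOn v' (Set.Icc 0 T))
    (hw' : ContinuousOn w' (Set.Icc 0 T))
    (hinit : w 0 = v 0) :
    (∫ t in (0 : ℝ)..T, (inner ℝ (v' t) (v t) : ℝ) * (T - t)) =
      (1 / 2) * (∫ t in (0 : ℝ)..T, ‖v t‖ ^ 2) - (T / 2) * ‖v 0‖ ^ 2 ∧
    0 ≤ ∫ t in (0 : ℝ)..T, (inner ℝ (v' t - w' t) (v t - w t) : ℝ) * (T - t) := by
  rw [← Set.uIcc_of_le hT.le] at hv hw hv' hw'
  refine ⟨by simpa using integral_inner_deriv_mul_sub_eq hv hv', ?_⟩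
  exact integral_inner_deriv_mul_sub_nonneg hT.le (fun t ht => (hv t ht).sub (hw t ht))
    (hv'.sub hw') (by rw [hinit, sub_self])

/-- for a flow `v` with values in the Hilbert pivot space `H` and the
weight `dμ(t) = (T-t)dt`, one has
`∫₀ᵀ ⟨D_t v, v⟩ (T-t) dt = (1/2)∫₀ᵀ ‖v(t)‖² dt − (T/2)‖v(0)‖²`; consequently, on the
set of flows with the same initial value, the time derivative is a monotone operator. -/
theorem weighted_derivative_identity_and_monotonicity
    (H : Type*) [NormedAddCommGroup H] [InnerProductSpace ℝ H] [CompleteSpace H]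
    (T : ℝ) (hT : 0 < T)
    (v w : ℝ → H) (v' w' : ℝ → H)
    (hv : ∀ t ∈ Set.Icc (0 : ℝ) T, HasDerivAt v (v' t) t)
    (hw : ∀ t ∈ Set.Icc (0 : ℝ) T, HasDerivAt w (w' t) t)
    (hv' : ContinuousOn v' (Set.Icc 0 T))
    (hw' : ContinuousOn w' (Set.Icc 0 T))
    (hinit : w 0 = v 0) :
    (∫ t in (0 : ℝ)..T, (inner ℝ (v' t) (v t) : ℝ) * (T - t)) =
      (1 / 2) * (∫ t in (0 : ℝ)..T, ‖v t‖ ^ 2) - (T / 2) * ‖v 0‖ ^ 2 ∧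
    0 ≤ ∫ t in (0 : ℝ)..T, (inner ℝ (v' t - w' t) (v t - w t) : ℝ) * (T - t) :=
  weighted_derivative_identity_and_monotonicity_general H T hT v w v' w' hv hw hv' hw' hinit
end
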